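/- (Compactness criterion for the characterisation) Let P be a finite set of atomic propositions and let C be any class of relational inquisitive modal models over P. The following are equivalent: (1) for every FO formula φ(x) with one free world-sort variable that is ~-invariant over C, there is an InqML formula ψ such that for all world-pointed models 𝔐,w in C: 𝔐 ⊨ φ(w) iff M(𝔐),w ⊨ ψ, where M(𝔐) is the inquisitive modal model induced by 𝔐; (2) every FO formula φ(x) with one free world-sort variable that is ~-invariant over C is ~^n-invariant over C for some n ∈ ℕ. -/

import Mathlib

/-- Formulas of inquisitive modal logic InqML over atomic propositions `P`. -/
inductive InqForm (P : Type) : Type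
  | atom : P → InqForm P
  | bot : InqForm P
  | and : InqForm P → InqForm P → InqForm P
  | impl : InqForm P → InqForm P → InqForm P
  | idisj : InqForm P → InqForm P → InqForm P
  | box : InqForm P → InqForm P
  | boxplus : InqForm P → InqForm P

/-- An inquisitive modal model `M = ⟨W, Σ, V⟩`. -/
structure InqModel (P : Type) where
  W : Type
  Sig : W → Set (Set W)
  Sig_nonempty : ∀ w, (Sig w).Nonempty
  Sig_downward : ∀ w, ∀ s ∈ Sig w, ∀ t ⊆ s, t ∈ Sig w
  V : P → Set W

/-- `σ(w) = ⋃ Σ(w)`. -/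
def InqModel.sigma {P : Type} (M : InqModel P) (w : M.W) : Set M.W :=
  ⋃₀ M.Sig w

/-- Support of a formula at an information state `s ⊆ W`. -/
def support {P : Type} (M : InqModel P) : InqForm P → Set M.W → Prop
  | .atom p, s => s ⊆ M.V p
  | .bot, s => s = ∅
  | .and φ ψ, s => support M φ s ∧ support M ψ s
  | .impl φ ψ, s => ∀ t ⊆ s, support M φ t → support M ψ t
  | .idisj φ ψ, s => support M φ s ∨ support M ψ s
  | .box φ, s => ∀ w ∈ s, support M φ (M.sigma w)
  | .boxplus φ, s => ∀ w ∈ s, ∀ t ∈ M.Sig w, support M φ t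

/-- Truth at a world: `M,w ⊨ φ` iff `M,{w} ⊨ φ`. -/
def truth {P : Type} (M : InqModel P) (w : M.W) (φ : InqForm P) : Prop :=
  support M φ {w}

/-- Modal depth: maximal nesting depth of `□` and `⊞`. -/
def mdepth {P : Type} : InqForm P → ℕ
  | .atom _ => 0
  | .bot => 0
  | .and φ ψ => max (mdepth φ) (mdepth ψ)
  | .impl φ ψ => max (mdepth φ) (mdepth ψ)
  | .idisj φ ψ => max (mdepth φ) (mdepth ψ)
  | .box φ => mdepth φ + 1
  | .boxplus φ => mdepth φ + 1

/-- Lift of a relation between worlds to sets of worlds: every world on either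
side is related to some world on the other side. -/
def StateRel {W W' : Type} (Z : W → W' → Prop) (s : Set W) (s' : Set W') : Prop :=
  (∀ w ∈ s, ∃ w' ∈ s', Z w w') ∧ (∀ w' ∈ s', ∃ w ∈ s, Z w w')

/-- `n`-bisimilarity between worlds of two inquisitive modal models. -/
def NBisimW {P : Type} (M M' : InqModel P) : ℕ → M.W → M'.W → Prop
  | 0, w, w' => ∀ p : P, w ∈ M.V p ↔ w' ∈ M'.V p
  | n + 1, w, w' => (∀ p : P, w ∈ M.V p ↔ w' ∈ M'.V p) ∧
      (∀ s ∈ M.Sig w, ∃ s' ∈ M'.Sig w', StateRel (NBisimW M M' n) s s') ∧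
      (∀ s' ∈ M'.Sig w', ∃ s ∈ M.Sig w, StateRel (NBisimW M M' n) s s')

/-- `n`-bisimilarity between information states. -/
def NBisimS {P : Type} (M M' : InqModel P) (n : ℕ) (s : Set M.W) (s' : Set M'.W) : Prop :=
  StateRel (NBisimW M M' n) s s'

/-- `Z` is a bisimulation between two inquisitive modal models. -/
def IsBisimulation {P : Type} (M M' : InqModel P) (Z : M.W → M'.W → Prop) : Prop :=
  ∀ w w', Z w w' →
    (∀ p : P, w ∈ M.V p ↔ w' ∈ M'.V p) ∧
    (∀ s ∈ M.Sig w, ∃ s' ∈ M'.Sig w', StateRel Z s s') ∧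
    (∀ s' ∈ M'.Sig w', ∃ s ∈ M.Sig w, StateRel Z s s')

/-- Bisimilarity of worlds: inclusion in some bisimulation. -/
def BisimW {P : Type} (M M' : InqModel P) (w : M.W) (w' : M'.W) : Prop :=
  ∃ Z, IsBisimulation M M' Z ∧ Z w w'

/-- Bisimilarity of information states. -/
def BisimS {P : Type} (M M' : InqModel P) (s : Set M.W) (s' : Set M'.W) : Prop :=
  StateRel (BisimW M M') s s'

/-- Two-sorted first-order formulas over the signature with a world sort, a
state sort, binary relations `E` and `∈` between worlds and states, equality on
both sorts, and a unary predicate for each atom in `P`.  Variables are de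
Bruijn indices; `FO P n m` has world-sort variables `Fin n` and state-sort
variables `Fin m`.  (Other connectives and `∃` are definable from `⊥`, `→`, `∀`.) -/
inductive FO (P : Type) : ℕ → ℕ → Type
  | eqW {n m : ℕ} : Fin n → Fin n → FO P n m
  | eqS {n m : ℕ} : Fin m → Fin m → FO P n m
  | rel {n m : ℕ} : Fin n → Fin m → FO P n m
  | mem {n m : ℕ} : Fin n → Fin m → FO P n m
  | atom {n m : ℕ} : P → Fin n → FO P n m
  | fal {n m : ℕ} : FO P n m
  | imp {n m : ℕ} : FO P n m → FO P n m → FO P n m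
  | allW {n m : ℕ} : FO P (n + 1) m → FO P n m
  | allS {n m : ℕ} : FO P n (m + 1) → FO P n m

/-- Satisfaction of a two-sorted first-order formula in the two-sorted
structure with world sort `W`, state sort `↥S`, relations `E` and membership,
and atom predicates given by `V`. -/
def FOsat {P W : Type} (S : Set (Set W)) (E : W → Set (Set W)) (V : P → Set W) :
    {n m : ℕ} → FO P n m → (Fin n → W) → (Fin m → ↥S) → Prop
  | _, _, .eqW i j, a, _ => a i = a j
  | _, _, .eqS i j, _, b => b i = b j
  | _, _, .rel i j, a, b => (b j : Set W) ∈ E (a i)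
  | _, _, .mem i j, a, b => a i ∈ (b j : Set W)
  | _, _, .atom p i, a, _ => a i ∈ V p
  | _, _, .fal, _, _ => False
  | _, _, .imp φ ψ, a, b => FOsat S E V φ a b → FOsat S E V ψ a b
  | _, _, .allW φ, a, b => ∀ w : W, FOsat S E V φ (Fin.cons w a) b
  | _, _, .allS φ, a, b => ∀ s : ↥S, FOsat S E V φ a (Fin.cons s b)

/-- A relational inquisitive modal model: a two-sorted structure
`⟨W, S, E, ∈, (P_i)⟩` with `S ⊆ ℘(W)` (extensionality built in), satisfying
non-emptiness and downward closure. -/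
structure RelModel (P : Type) where
  W : Type
  S : Set (Set W)
  E : W → Set (Set W)
  V : P → Set W
  wNonempty : Nonempty W
  sNonempty : S.Nonempty
  E_sub : ∀ w, E w ⊆ S
  E_nonempty : ∀ w, (E w).Nonempty
  downward : ∀ w, ∀ s ∈ E w, ∀ t ⊆ s, t ∈ S ∧ t ∈ E w

/-- The inquisitive modal model induced by a relational model:
`Σ(w) := E[w]`, `V(p_i) := P_i`. -/
def RelModel.toInq {P : Type} (𝔐 : RelModel P) : InqModel P where
  W := 𝔐.W
  Sig := 𝔐.E
  Sig_nonempty := 𝔐.E_nonempty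
  Sig_downward := fun w s hs t ht => (𝔐.downward w s hs t ht).2
  V := 𝔐.V

/-- Satisfaction of an `FO` formula with one free world-sort variable at a world. -/
def satW {P : Type} (𝔐 : RelModel P) (φ : FO P 1 0) (w : 𝔐.W) : Prop :=
  FOsat 𝔐.S 𝔐.E 𝔐.V φ (fun _ => w) (fun i => i.elim0)

/-- `φ(x)` is invariant under bisimilarity over the class `C` of relational models. -/
def BisimInvariantOver {P : Type} (C : RelModel P → Prop) (φ : FO P 1 0) : Prop :=
  ∀ (𝔐 𝔐' : RelModel P), C 𝔐 → C 𝔐' → ∀ (w : 𝔐.W) (w' : 𝔐'.W),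
    BisimW 𝔐.toInq 𝔐'.toInq w w' → (satW 𝔐 φ w ↔ satW 𝔐' φ w')

/-- `φ(x)` is invariant under `n`-bisimilarity over the class `C`. -/
def NBisimInvariantOver {P : Type} (C : RelModel P → Prop) (φ : FO P 1 0) (n : ℕ) : Prop :=
  ∀ (𝔐 𝔐' : RelModel P), C 𝔐 → C 𝔐' → ∀ (w : 𝔐.W) (w' : 𝔐'.W),
    NBisimW 𝔐.toInq 𝔐'.toInq n w w' → (satW 𝔐 φ w ↔ satW 𝔐' φ w')

/-!
Support of a formula of modal depth at most `n` is invariant under `n`-bisimilarity of states,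
so a formula `ψ` defining `φ` over `C` makes `φ` invariant under `~^(mdepth ψ)`.

Conversely, with finitely many atoms there are finitely many abstract `n`-types, and two worlds
have the same `n`-type iff they are `n`-bisimilar. The `(n+1)`-type of `w` records its atoms and
the family of sets of `n`-types realised by the states of `Σ(w)`. That family is a lower set,
hence equal to a lower set `T` iff each of the two is covered by the other; the two halves are
expressed by `⊞` and `¬⊞` applied to classical and inquisitive disjunctions of characteristic
formulas of `n`-types. So every type has a characteristic formula, and a `~^n`-invariant `φ` is
defined by the inquisitive disjunction of the characteristic formulas of the types of the
worlds satisfying it.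
-/
section Support

variable {P : Type} (M : InqModel P)

theorem support_mono : ∀ (φ : InqForm P) {s t : Set M.W},
    support M φ s → t ⊆ s → support M φ t
  | .atom _, _, _, hs, hts => hts.trans hs
  | .bot, _, _, hs, hts => Set.subset_eq_empty hts hs
  | .and φ ψ, _, _, hs, hts => ⟨support_mono φ hs.1 hts, support_mono ψ hs.2 hts⟩
  | .impl _ _, _, _, hs, hts => fun u hu hφ => hs u (hu.trans hts) hφ
  | .idisj φ ψ, _, _, hs, hts =>
      hs.imp (support_mono φ · hts) (support_mono ψ · hts)
  | .box _, _, _, hs, hts => fun w hw => hs w (hts hw)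
  | .boxplus _, _, _, hs, hts => fun w hw => hs w (hts hw)

def InqForm.neg (φ : InqForm P) : InqForm P := .impl φ .bot

def InqForm.top : InqForm P := .impl .bot .bot

noncomputable def InqForm.bigAnd {α : Type} [Finite α] (s : Set α) (f : α → InqForm P) :
    InqForm P :=
  (s.toFinite.toFinset.toList.map f).foldr .and .top

noncomputable def InqForm.bigOr {α : Type} [Finite α] (s : Set α) (f : α → InqForm P) :
    InqForm P :=
  (s.toFinite.toFinset.toList.map f).foldr .idisj .bot

noncomputable def InqForm.bigClassicalOr {α : Type} [Finite α] (s : Set α)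
    (f : α → InqForm P) : InqForm P :=
  .neg (.bigAnd s fun a => .neg (f a))

variable {M}

theorem support_neg {φ : InqForm P} {t : Set M.W} :
    support M φ.neg t ↔ ∀ w ∈ t, ¬ support M φ {w} := by
  refine ⟨fun h w hw hφ => ?_, fun h u hu hφ => ?_⟩
  · exact Set.singleton_ne_empty w (h {w} (Set.singleton_subset_iff.2 hw) hφ)
  · exact Set.eq_empty_iff_forall_notMem.2 fun w hw =>
      h w (hu hw) (support_mono M φ hφ (Set.singleton_subset_iff.2 hw))

theorem support_top (t : Set M.W) : support M .top t := fun _ _ h => h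

theorem support_foldr_and {l : List (InqForm P)} {t : Set M.W} :
    support M (l.foldr .and .top) t ↔ ∀ φ ∈ l, support M φ t := by
  induction l with
  | nil => simpa using support_top t
  | cons φ l ih => simp only [List.foldr_cons, List.forall_mem_cons, ← ih]; rfl

theorem support_foldr_idisj {l : List (InqForm P)} {t : Set M.W} :
    support M (l.foldr .idisj .bot) t ↔ t = ∅ ∨ ∃ φ ∈ l, support M φ t := by
  induction l with
  | nil => simp [support]
  | cons φ l ih =>
    change support M φ t ∨ support M _ t ↔ _
    rw [ih, List.exists_mem_cons_iff]
    tauto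

theorem support_bigAnd {α : Type} [Finite α] {s : Set α} {f : α → InqForm P}
    {t : Set M.W} : support M (.bigAnd s f) t ↔ ∀ a ∈ s, support M (f a) t := by
  simp [InqForm.bigAnd, support_foldr_and]

theorem support_bigOr {α : Type} [Finite α] {s : Set α} {f : α → InqForm P}
    {t : Set M.W} : support M (.bigOr s f) t ↔ t = ∅ ∨ ∃ a ∈ s, support M (f a) t := by
  simp [InqForm.bigOr, support_foldr_idisj]

theorem support_bigClassicalOr {α : Type} [Finite α] {s : Set α} {f : α → InqForm P}
    {t : Set M.W} :
    support M (.bigClassicalOr s f) t ↔ ∀ w ∈ t, ∃ a ∈ s, support M (f a) {w} := by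
  simp [InqForm.bigClassicalOr, support_neg, support_bigAnd]

end Support

namespace StateRel

variable {W W' : Type} {Z : W → W' → Prop} {s : Set W} {s' : Set W'}

theorem singleton {w : W} {w' : W'} (h : Z w w') : StateRel Z {w} {w'} :=
  ⟨fun _ hv => ⟨w', rfl, hv ▸ h⟩, fun _ hv' => ⟨w, rfl, hv' ▸ h⟩⟩

theorem symm (h : StateRel Z s s') : StateRel (flip Z) s' s := ⟨h.2, h.1⟩

theorem forall_mem_iff (h : StateRel Z s s') {p : W → Prop} {q : W' → Prop}
    (hZ : ∀ w w', Z w w' → (p w ↔ q w')) : (∀ w ∈ s, p w) ↔ ∀ w' ∈ s', q w' := by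
  refine ⟨fun hp w' hw' => ?_, fun hq w hw => ?_⟩
  · obtain ⟨w, hw, hz⟩ := h.2 w' hw'
    exact (hZ w w' hz).1 (hp w hw)
  · obtain ⟨w', hw', hz⟩ := h.1 w hw
    exact (hZ w w' hz).2 (hq w' hw')

theorem exists_subset (h : StateRel Z s s') {t : Set W} (hts : t ⊆ s) :
    ∃ t' ⊆ s', StateRel Z t t' := by
  refine ⟨{w' ∈ s' | ∃ w ∈ t, Z w w'}, fun _ hw' => hw'.1, fun w hw => ?_, fun w' hw' => hw'.2⟩
  obtain ⟨w', hw', hz⟩ := h.1 w (hts hw)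
  exact ⟨w', ⟨hw', w, hw, hz⟩, hz⟩

theorem sUnion {S : Set (Set W)} {S' : Set (Set W')} (h : StateRel (StateRel Z) S S') :
    StateRel Z (⋃₀ S) (⋃₀ S') := by
  refine ⟨fun w ⟨s, hs, hw⟩ => ?_, fun w' ⟨s', hs', hw'⟩ => ?_⟩
  · obtain ⟨s', hs', hss'⟩ := h.1 s hs
    obtain ⟨w', hw', hz⟩ := hss'.1 w hw
    exact ⟨w', ⟨s', hs', hw'⟩, hz⟩
  · obtain ⟨s, hs, hss'⟩ := h.2 s' hs'
    obtain ⟨w, hw, hz⟩ := hss'.2 w' hw'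
    exact ⟨w, ⟨s, hs, hw⟩, hz⟩

theorem congr {Z₁ : W → W' → Prop} (hZ : ∀ w w', Z w w' ↔ Z₁ w w') :
    StateRel Z s s' ↔ StateRel Z₁ s s' := by
  simp only [StateRel, hZ]

theorem eq_iff_image_eq {α : Type} {f : W → α} {g : W' → α} :
    StateRel (fun w w' => f w = g w') s s' ↔ f '' s = g '' s' := by
  rw [StateRel, Set.Subset.antisymm_iff, Set.image_subset_iff, Set.image_subset_iff]
  simp only [Set.subset_def, Set.mem_preimage, Set.mem_image, eq_comm (a := f _)]

end StateRel

section NBisim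

variable {P : Type} {M M' : InqModel P}

theorem NBisimW.atoms_iff {n : ℕ} {w : M.W} {w' : M'.W} (h : NBisimW M M' n w w') (p : P) :
    w ∈ M.V p ↔ w' ∈ M'.V p := by
  cases n with
  | zero => exact h p
  | succ n => exact h.1 p

theorem support_iff_of_stateRel_nbisimW :
    ∀ (φ : InqForm P) {n : ℕ}, mdepth φ ≤ n → ∀ {s : Set M.W} {s' : Set M'.W},
      StateRel (NBisimW M M' n) s s' → (support M φ s ↔ support M' φ s')
  | .atom p, _, _, _, _, h => h.forall_mem_iff fun _ _ hz => hz.atoms_iff p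
  | .bot, _, _, _, _, h => by
      simpa only [support, Set.eq_empty_iff_forall_notMem] using
        h.forall_mem_iff (p := fun _ => False) (q := fun _ => False) fun _ _ _ => Iff.rfl
  | .and φ ψ, _, hd, _, _, h => by
      rw [mdepth, max_le_iff] at hd
      exact and_congr (support_iff_of_stateRel_nbisimW φ hd.1 h)
        (support_iff_of_stateRel_nbisimW ψ hd.2 h)
  | .idisj φ ψ, _, hd, _, _, h => by
      rw [mdepth, max_le_iff] at hd
      exact or_congr (support_iff_of_stateRel_nbisimW φ hd.1 h)
        (support_iff_of_stateRel_nbisimW ψ hd.2 h)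
  | .impl φ ψ, _, hd, _, _, h => by
      rw [mdepth, max_le_iff] at hd
      have step : ∀ {t t'}, StateRel (NBisimW M M' _) t t' →
          ((support M φ t → support M ψ t) ↔ (support M' φ t' → support M' ψ t')) :=
        fun ht => imp_congr (support_iff_of_stateRel_nbisimW φ hd.1 ht)
          (support_iff_of_stateRel_nbisimW ψ hd.2 ht)
      refine ⟨fun hs t' ht' => ?_, fun hs' t ht => ?_⟩
      · obtain ⟨t, hts, htt'⟩ := h.symm.exists_subset ht'
        exact (step htt'.symm).1 (hs t hts)
      · obtain ⟨t', hts', htt'⟩ := h.exists_subset ht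
        exact (step htt').2 (hs' t' hts')
  | .box _, 0, hd, _, _, _ | .boxplus _, 0, hd, _, _, _ => absurd hd (by simp [mdepth])
  | .box φ, _ + 1, hd, _, _, h =>
      h.forall_mem_iff fun _ _ hz =>
        support_iff_of_stateRel_nbisimW φ (Nat.le_of_succ_le_succ hd) (StateRel.sUnion hz.2)
  | .boxplus φ, _ + 1, hd, _, _, h =>
      h.forall_mem_iff fun _ _ hz => StateRel.forall_mem_iff hz.2 fun _ _ htt' =>
        support_iff_of_stateRel_nbisimW φ (Nat.le_of_succ_le_succ hd) htt'

end NBisim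

theorem IsLowerSet.eq_iff_forall_exists_le {α : Type} [Preorder α] {s t : Set α}
    (hs : IsLowerSet s) (ht : IsLowerSet t) :
    s = t ↔ (∀ a ∈ s, ∃ b ∈ t, a ≤ b) ∧ ∀ b ∈ t, ∃ a ∈ s, b ≤ a := by
  refine ⟨?_, fun ⟨hst, hts⟩ => Set.Subset.antisymm (fun a ha => ?_) fun b hb => ?_⟩
  · rintro rfl
    exact ⟨fun a ha => ⟨a, ha, le_rfl⟩, fun a ha => ⟨a, ha, le_rfl⟩⟩
  · obtain ⟨b, hb, hab⟩ := hst a ha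
    exact ht hab hb
  · obtain ⟨a, ha, hba⟩ := hts b hb
    exact hs hba ha

section Types

variable {P : Type}

/-- Abstract `n`-types: the atoms true at a world and, for `n + 1`, the family of sets of
`n`-types realised by the states in `Σ(w)`. -/
def Ty (P : Type) : ℕ → Type
  | 0 => Set P
  | n + 1 => Set P × Set (Set (Ty P n))

instance Ty.finite [Finite P] : ∀ n, Finite (Ty P n)
  | 0 => inferInstanceAs (Finite (Set P))
  | n + 1 =>
    have : Finite (Ty P n) := Ty.finite n
    inferInstanceAs (Finite (Set P × Set (Set (Ty P n))))

def ty (M : InqModel P) : (n : ℕ) → M.W → Ty P n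
  | 0, w => {p | w ∈ M.V p}
  | n + 1, w => ({p | w ∈ M.V p}, (ty M n '' ·) '' M.Sig w)

variable {M M' : InqModel P}

theorem ty_eq_iff_nbisimW :
    ∀ (n : ℕ) (w : M.W) (w' : M'.W), ty M n w = ty M' n w' ↔ NBisimW M M' n w w'
  | 0, _, _ => Set.ext_iff
  | n + 1, w, w' => by
    have hstate : ∀ (s : Set M.W) (s' : Set M'.W),
        ty M n '' s = ty M' n '' s' ↔ StateRel (NBisimW M M' n) s s' := fun _ _ =>
      StateRel.eq_iff_image_eq.symm.trans (StateRel.congr (ty_eq_iff_nbisimW n))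
    exact (Prod.ext_iff (α := Set P) (β := Set (Set (Ty P n)))).trans <| and_congr Set.ext_iff <|
      StateRel.eq_iff_image_eq.symm.trans (StateRel.congr hstate)

theorem empty_mem_ty_succ_snd (n : ℕ) (w : M.W) : ∅ ∈ (ty M (n + 1) w).2 := by
  obtain ⟨s, hs⟩ := M.Sig_nonempty w
  exact ⟨∅, M.Sig_downward w s hs ∅ s.empty_subset, Set.image_empty _⟩

theorem isLowerSet_ty_succ_snd (n : ℕ) (w : M.W) : IsLowerSet (ty M (n + 1) w).2 := by
  rintro _ σ hσ ⟨s, hs, rfl⟩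
  refine ⟨{v ∈ s | ty M n v ∈ σ}, M.Sig_downward w s hs _ fun _ hv => hv.1, ?_⟩
  ext τ
  refine ⟨fun ⟨v, hv, hvτ⟩ => hvτ ▸ hv.2, fun hτ => ?_⟩
  obtain ⟨v, hv, rfl⟩ := hσ hτ
  exact ⟨v, ⟨hv, hτ⟩, rfl⟩

theorem ty_succ_eq_iff {n : ℕ} {w : M.W} {τ : Ty P (n + 1)} (hτ : IsLowerSet τ.2) :
    ty M (n + 1) w = τ ↔ {p | w ∈ M.V p} = τ.1 ∧
      (∀ s ∈ M.Sig w, ∃ σ ∈ τ.2, ty M n '' s ⊆ σ) ∧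
      ∀ σ ∈ τ.2, ∃ s ∈ M.Sig w, σ ⊆ ty M n '' s := by
  refine (Prod.ext_iff (α := Set P) (β := Set (Set (Ty P n)))).trans (and_congr Iff.rfl ?_)
  rw [(isLowerSet_ty_succ_snd n w).eq_iff_forall_exists_le hτ]
  simp only [ty, Set.forall_mem_image, Set.exists_mem_image]

end Types

section CharForm

variable {P : Type} {M : InqModel P} {α : Type} [Finite α] {f : M.W → α} {χ : α → InqForm P}

theorem support_bigClassicalOr_iff_image_subset (hχ : ∀ v a, support M (χ a) {v} ↔ f v = a)
    {σ : Set α} {s : Set M.W} : support M (.bigClassicalOr σ χ) s ↔ f '' s ⊆ σ := by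
  simp [support_bigClassicalOr, hχ, Set.subset_def]

theorem support_bigOr_neg_iff (hχ : ∀ v a, support M (χ a) {v} ↔ f v = a)
    {σ : Set α} {s : Set M.W} :
    support M (.bigOr σ fun a => (χ a).neg) s ↔ s = ∅ ∨ ¬ σ ⊆ f '' s := by
  simp [support_bigOr, support_neg, hχ, Set.subset_def]

noncomputable def forthForm (χ : α → InqForm P) (T : Set (Set α)) : InqForm P :=
  .boxplus (.bigOr T fun σ => .bigClassicalOr σ χ)

noncomputable def backForm (χ : α → InqForm P) (T : Set (Set α)) : InqForm P :=
  .bigAnd {σ ∈ T | σ.Nonempty} fun σ => (InqForm.boxplus (.bigOr σ fun a => (χ a).neg)).neg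

theorem support_forthForm (hχ : ∀ v a, support M (χ a) {v} ↔ f v = a) {T : Set (Set α)}
    (hT : ∅ ∈ T) {t : Set M.W} :
    support M (forthForm χ T) t ↔ ∀ w ∈ t, ∀ s ∈ M.Sig w, ∃ σ ∈ T, f '' s ⊆ σ := by
  refine forall₂_congr fun w _ => forall₂_congr fun s _ => ?_
  rw [support_bigOr]
  simp only [support_bigClassicalOr_iff_image_subset hχ]
  refine or_iff_right_of_imp ?_
  rintro rfl
  exact ⟨∅, hT, (Set.image_empty f).subset⟩

theorem support_backForm (hχ : ∀ v a, support M (χ a) {v} ↔ f v = a) {T : Set (Set α)}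
    {t : Set M.W} :
    support M (backForm χ T) t ↔ ∀ w ∈ t, ∀ σ ∈ T, ∃ s ∈ M.Sig w, σ ⊆ f '' s := by
  simp only [backForm, support_bigAnd, support_neg, Set.mem_ofPred_eq, and_imp]
  refine ⟨fun h w hw σ hσ => ?_, fun h σ hσ hne w hw hall => ?_⟩
  · rcases σ.eq_empty_or_nonempty with rfl | hne
    · obtain ⟨s, hs⟩ := M.Sig_nonempty w
      exact ⟨s, hs, Set.empty_subset _⟩
    · by_contra! hno
      exact h σ hσ hne w hw fun _ hu s hs =>
        (support_bigOr_neg_iff hχ).2 (Or.inr (hno s (Set.mem_singleton_iff.1 hu ▸ hs)))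
  · obtain ⟨s, hs, hsub⟩ := h w hw σ hσ
    rcases (support_bigOr_neg_iff hχ).1 (hall w rfl s hs) with rfl | hns
    · exact hne.ne_empty (Set.subset_empty_iff.1 (by simpa using hsub))
    · exact hns hsub

variable [Finite P]

noncomputable def atomsForm (a : Set P) : InqForm P :=
  .and (.bigAnd a .atom) (.bigAnd aᶜ fun p => (InqForm.atom p).neg)

theorem support_atomsForm {a : Set P} {t : Set M.W} :
    support M (atomsForm a) t ↔ ∀ w ∈ t, {p | w ∈ M.V p} = a := by
  simp only [atomsForm, support, support_bigAnd, support_neg, Set.ext_iff, Set.mem_ofPred_eq,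
    Set.mem_compl_iff, Set.singleton_subset_iff]
  refine ⟨fun ⟨hpos, hneg⟩ w hw p => ⟨fun hwp => ?_, fun hp => hpos p hp hw⟩,
    fun h => ⟨fun p hp w hw => (h w hw p).2 hp, fun p hp w hw hwp => hp ((h w hw p).1 hwp)⟩⟩
  by_contra hp
  exact hneg p hp w hw hwp

open Classical in
/-- A family of sets of types that is not a lower set containing `∅` is realised by no world,
so its type gets `⊥`. -/
noncomputable def charForm : (n : ℕ) → Ty P n → InqForm P
  | 0, τ => atomsForm τ
  | n + 1, τ =>
    if ∅ ∈ τ.2 ∧ IsLowerSet τ.2 then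
      .and (atomsForm τ.1) (.and (forthForm (charForm n) τ.2) (backForm (charForm n) τ.2))
    else .bot

theorem support_charForm :
    ∀ (n : ℕ) {M : InqModel P} {t : Set M.W} (τ : Ty P n),
      support M (charForm n τ) t ↔ ∀ w ∈ t, ty M n w = τ
  | 0, _, _, _ => support_atomsForm
  | n + 1, M, t, τ => by
    have hχ : ∀ v τ', support M (charForm n τ') {v} ↔ ty M n v = τ' := fun _ τ' =>
      (support_charForm n τ').trans forall_eq
    rw [charForm]
    split_ifs with hτ
    · simp only [ty_succ_eq_iff hτ.2, forall₂_and]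
      exact and_congr support_atomsForm
        (and_congr (support_forthForm hχ hτ.1) (support_backForm hχ))
    · refine Set.eq_empty_iff_forall_notMem.trans <| forall_congr' fun w =>
        ⟨fun h hw => absurd hw h, fun h hw => hτ ?_⟩
      rw [← h hw]
      exact ⟨empty_mem_ty_succ_snd n w, isLowerSet_ty_succ_snd n w⟩

end CharForm

section Characterisation

variable {P : Type}

theorem truth_iff_of_nbisimW {M M' : InqModel P} {ψ : InqForm P} {n : ℕ} (hψ : mdepth ψ ≤ n)
    {w : M.W} {w' : M'.W} (h : NBisimW M M' n w w') : truth M w ψ ↔ truth M' w' ψ :=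
  support_iff_of_stateRel_nbisimW ψ hψ (.singleton h)

theorem truth_bigOr_charForm [Finite P] {M : InqModel P} {n : ℕ} {A : Set (Ty P n)} {w : M.W} :
    truth M w (.bigOr A (charForm n)) ↔ ty M n w ∈ A := by
  simp [truth, support_bigOr, support_charForm]

theorem nbisimInvariantOver_mdepth {C : RelModel P → Prop} {φ : FO P 1 0} {ψ : InqForm P}
    (h : ∀ 𝔐 : RelModel P, C 𝔐 → ∀ w : 𝔐.W, satW 𝔐 φ w ↔ truth 𝔐.toInq w ψ) :
    NBisimInvariantOver C φ (mdepth ψ) := fun 𝔐 𝔐' hC hC' w w' hw =>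
  (h 𝔐 hC w).trans <| (truth_iff_of_nbisimW le_rfl hw).trans (h 𝔐' hC' w').symm

theorem exists_inqForm_of_nbisimInvariantOver [Finite P] {C : RelModel P → Prop}
    {φ : FO P 1 0} {n : ℕ} (h : NBisimInvariantOver C φ n) :
    ∃ ψ : InqForm P, ∀ 𝔐 : RelModel P, C 𝔐 → ∀ w : 𝔐.W, satW 𝔐 φ w ↔ truth 𝔐.toInq w ψ := by
  refine ⟨.bigOr {τ | ∃ 𝔐 : RelModel P, C 𝔐 ∧ ∃ w, ty 𝔐.toInq n w = τ ∧ satW 𝔐 φ w}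
    (charForm n), fun 𝔐 hC w => ?_⟩
  refine Iff.trans ⟨fun hw => ⟨𝔐, hC, w, rfl, hw⟩, fun ⟨𝔐', hC', w', hty, hw'⟩ => ?_⟩
    truth_bigOr_charForm.symm
  exact (h 𝔐' 𝔐 hC' hC w' w ((ty_eq_iff_nbisimW (M' := 𝔐.toInq) n w' w).1 hty)).1 hw'

end Characterisation

/-- **Compactness criterion for the characterisation**: over any class `C` of
relational inquisitive modal models, `InqML ≡ FO/~` for world properties iff
every `~`-invariant `FO` formula is `~^n`-invariant over `C` for some `n`. -/
theorem compactness_criterion {P : Type} [Finite P] (C : RelModel P → Prop) :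
    (∀ φ : FO P 1 0, BisimInvariantOver C φ →
      ∃ ψ : InqForm P, ∀ 𝔐 : RelModel P, C 𝔐 → ∀ w : 𝔐.W,
        (satW 𝔐 φ w ↔ truth 𝔐.toInq w ψ)) ↔
    (∀ φ : FO P 1 0, BisimInvariantOver C φ →
      ∃ n : ℕ, NBisimInvariantOver C φ n) := by
  refine ⟨fun h φ hφ => ?_, fun h φ hφ => ?_⟩
  · obtain ⟨ψ, hψ⟩ := h φ hφ
    exact ⟨mdepth ψ, nbisimInvariantOver_mdepth hψ⟩
  · obtain ⟨n, hn⟩ := h φ hφ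
    exact exists_inqForm_of_nbisimInvariantOver hn
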